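/- arXiv:2202.11046 — 4 statements merged into one kernel-verified Lean document; each statement's English description precedes it below -/
import Mathlib

section
/- Let R₁ ≤ R₂ ≤ ... ≤ Rₘ be real numbers in [-M_r, M_r] and let G(x) = (1/m)·#{i : Rᵢ ≤ x} be their empirical CDF. Let g : [0,1] → [0,1] be a function with g(0) = 0 and g(1) = 1. Then ∫_{-M_r}^{0} (g(1 - G(x)) - 1) dx + ∫_{0}^{M_r} g(1 - G(x)) dx = Σ_{i=1}^{m} Rᵢ · (g(1 - (i-1)/m) - g(1 - i/m)), where the Rᵢ on the right are in sorted (nondecreasing) order. -/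
/-!
With `c k = g (1 - k / m)`, sortedness makes `{i | R i ≤ x}` an initial segment of `Fin m`, so
`g (1 - G x) = c 0 - ∑ i, (c i - c (i + 1)) 𝟙{R i ≤ x}` telescopes. Integrating each indicator
over `[-Mr, Mr]` gives `Mr - R i`, and the weights `c i - c (i + 1)` sum to
`c 0 - c m = g 1 - g 0 = 1`, which cancels the `Mr` terms.
-/

open MeasureTheory Finset

theorem Monotone.apply_le_iff_lt_card_filter_le {α : Type*} [Preorder α] [DecidableLE α]
    {m : ℕ} {R : Fin m → α} (hR : Monotone R) (x : α) (i : Fin m) :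
    R i ≤ x ↔ (i : ℕ) < #{j | R j ≤ x} := by
  constructor
  · intro hi
    have hsub : Iic i ⊆ ({j | R j ≤ x} : Finset (Fin m)) := fun j hj => by
      simpa using (hR (mem_Iic.1 hj)).trans hi
    have h_card := card_le_card hsub
    rw [Fin.card_Iic] at h_card
    omega
  · intro hlt
    by_contra hi
    have hsub : ({j | R j ≤ x} : Finset (Fin m)) ⊆ Iio i := fun j hj =>
      mem_Iio.2 (lt_of_not_ge fun hij => hi ((hR hij).trans (mem_filter.1 hj).2))
    exact (card_le_card hsub).not_gt (by simpa [Fin.card_Iio] using hlt)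

theorem Monotone.apply_card_filter_le_eq_sub_sum {α M : Type*} [Preorder α] [DecidableLE α]
    [AddCommGroup M] {m : ℕ} {R : Fin m → α} (hR : Monotone R) (c : ℕ → M) (x : α) :
    c #{i | R i ≤ x} = c 0 - ∑ i, if R i ≤ x then c i - c (i + 1) else 0 := by
  set N := #{i | R i ≤ x}
  have hN : N ≤ m := (card_le_univ _).trans_eq (Fintype.card_fin m)
  have h_iff (i : Fin m) : R i ≤ x ↔ (i : ℕ) < N := hR.apply_le_iff_lt_card_filter_le x i
  simp only [h_iff]
  rw [Fin.sum_univ_eq_sum_range (fun i => if i < N then c i - c (i + 1) else 0), ← sum_filter,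
    show (range m).filter (· < N) = range N by ext j; simp only [mem_filter, mem_range]; omega,
    sum_range_sub', sub_sub_cancel]

theorem intervalIntegrable_ite_le (r a b : ℝ) :
    IntervalIntegrable (fun x => if r ≤ x then (1 : ℝ) else 0) volume a b :=
  Monotone.intervalIntegrable fun x y hxy => by split_ifs <;> linarith

theorem integral_ite_le_of_mem_Icc {a b r : ℝ} (hr : r ∈ Set.Icc a b) :
    ∫ x in a..b, (if r ≤ x then (1 : ℝ) else 0) = b - r := by
  have h_left : ∫ x in a..r, (if r ≤ x then (1 : ℝ) else 0) = 0 := by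
    rw [intervalIntegral.integral_congr_ae (g := fun _ => 0) ?_, intervalIntegral.integral_zero]
    filter_upwards [volume.ae_ne r] with x hxr hx
    rw [Set.uIoc_of_le hr.1] at hx
    exact if_neg (not_le.2 (lt_of_le_of_ne hx.2 hxr))
  have h_right : ∫ x in r..b, (if r ≤ x then (1 : ℝ) else 0) = b - r := by
    rw [intervalIntegral.integral_congr (g := fun _ => 1) fun x hx => if_pos ?_]
    · simp
    · exact (Set.uIcc_of_le hr.2 ▸ hx).1
  rw [← intervalIntegral.integral_add_adjacent_intervals (intervalIntegrable_ite_le r a r)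
    (intervalIntegrable_ite_le r r b), h_left, h_right, zero_add]

theorem intervalIntegrable_sum_mul_ite_le {ι : Type*} (s : Finset ι) (d r : ι → ℝ) (a b : ℝ) :
    IntervalIntegrable (fun x => ∑ i ∈ s, d i * if r i ≤ x then 1 else 0) volume a b := by
  simpa only [Finset.sum_fn] using
    IntervalIntegrable.sum s fun i _ => (intervalIntegrable_ite_le (r i) a b).const_mul (d i)

theorem integral_sum_mul_ite_le {ι : Type*} {s : Finset ι} (d : ι → ℝ) {r : ι → ℝ} {a b : ℝ}
    (hr : ∀ i ∈ s, r i ∈ Set.Icc a b) :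
    ∫ x in a..b, (∑ i ∈ s, d i * if r i ≤ x then 1 else 0) = ∑ i ∈ s, d i * (b - r i) := by
  rw [intervalIntegral.integral_finsetSum fun i _ =>
    (intervalIntegrable_ite_le (r i) a b).const_mul (d i)]
  exact sum_congr rfl fun i hi => by
    rw [intervalIntegral.integral_const_mul, integral_ite_le_of_mem_Icc (hr i hi)]

theorem drm_empirical_order_statistics_general
    (m : ℕ) (hm : 1 ≤ m) (Mr : ℝ)
    (R : Fin m → ℝ) (hmono : Monotone R)
    (hbound : ∀ i, R i ∈ Set.Icc (-Mr) Mr)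
    (g : ℝ → ℝ) (hg0 : g 0 = 0) (hg1 : g 1 = 1)
    (G : ℝ → ℝ)
    (hG : ∀ x, G x = ((Finset.univ.filter (fun i : Fin m => R i ≤ x)).card : ℝ) / m) :
    (∫ x in (-Mr)..0, (g (1 - G x) - 1)) + ∫ x in (0:ℝ)..Mr, g (1 - G x)
      = ∑ i : Fin m, R i *
          (g (1 - (i : ℝ) / m) - g (1 - ((i : ℝ) + 1) / m)) := by
  set c : ℕ → ℝ := fun k => g (1 - k / m)
  set φ : ℝ → ℝ := fun x => ∑ i : Fin m, (c i - c (i + 1)) * if R i ≤ x then 1 else 0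
  have hc0 : c 0 = 1 := by simp [c, hg1]
  have hcm : c m = 0 := by
    simp only [c, div_self (Nat.cast_ne_zero.2 (by omega) : (m : ℝ) ≠ 0), sub_self, hg0]
  have hφ x : g (1 - G x) = 1 - φ x := by
    have h_count : g (1 - G x) = c #{i | R i ≤ x} := by rw [hG]
    rw [h_count, hmono.apply_card_filter_le_eq_sub_sum c x, hc0]
    simp only [φ, mul_ite, mul_one, mul_zero]
  have hφ_int a b : IntervalIntegrable φ volume a b := intervalIntegrable_sum_mul_ite_le _ _ _ a b
  have h_telescope : ∑ i : Fin m, (c i - c (i + 1)) = 1 := by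
    rw [Fin.sum_univ_eq_sum_range (fun i => c i - c (i + 1)), sum_range_sub', hc0, hcm, sub_zero]
  calc _ = (∫ x in -Mr..0, -φ x) + ∫ x in 0..Mr, (1 - φ x) := by
        simp only [hφ, sub_sub_cancel_left]
    _ = Mr - ∫ x in -Mr..Mr, φ x := by
      rw [intervalIntegral.integral_neg,
        intervalIntegral.integral_sub intervalIntegrable_const (hφ_int 0 Mr),
        ← intervalIntegral.integral_add_adjacent_intervals (hφ_int (-Mr) 0) (hφ_int 0 Mr)]
      simp only [intervalIntegral.integral_const, smul_eq_mul, mul_one]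
      ring
    _ = ∑ i : Fin m, (Mr * (c i - c (i + 1)) - (c i - c (i + 1)) * (Mr - R i)) := by
      rw [integral_sum_mul_ite_le _ fun i _ => hbound i, sum_sub_distrib, ← mul_sum, h_telescope,
        mul_one]
    _ = _ := sum_congr rfl fun i _ => by simp only [c]; push_cast; ring

/-- The Choquet-integral DRM estimate based on the empirical CDF of `m` sorted
samples equals the order-statistics expression. -/
theorem drm_empirical_order_statistics
    (m : ℕ) (hm : 1 ≤ m) (Mr : ℝ) (hMr : 0 < Mr)
    (R : Fin m → ℝ) (hmono : Monotone R)
    (hbound : ∀ i, R i ∈ Set.Icc (-Mr) Mr)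
    (g : ℝ → ℝ) (hg0 : g 0 = 0) (hg1 : g 1 = 1)
    (G : ℝ → ℝ)
    (hG : ∀ x, G x = ((Finset.univ.filter (fun i : Fin m => R i ≤ x)).card : ℝ) / m) :
    (∫ x in (-Mr)..0, (g (1 - G x) - 1)) + ∫ x in (0:ℝ)..Mr, g (1 - G x)
      = ∑ i : Fin m, R i *
          (g (1 - (i : ℝ) / m) - g (1 - ((i : ℝ) + 1) / m)) :=
  drm_empirical_order_statistics_general m hm Mr R hmono hbound g hg0 hg1 G hG
end

section
/- Let X and Y be real-valued random variables (on the same probability space) with values in [-M_r, M_r], with CDFs F_X and F_Y. Let g : [0,1] → [0,1] be M_{g'}-Lipschitz with g(0)=0, g(1)=1, and define ρ_g(Z) = ∫_{-M_r}^{0}(g(1-F_Z(x)) - 1)dx + ∫_{0}^{M_r} g(1-F_Z(x))dx. Then |ρ_g(X) - ρ_g(Y)| ≤ M_{g'} · ∫_{-M_r}^{M_r} |F_X(x) - F_Y(x)| dx. -/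
open MeasureTheory

/-- The DRM with an `M_{g'}`-Lipschitz distortion function differs on two bounded
random variables by at most `M_{g'}` times the `L¹` distance of their CDFs. -/
theorem drm_cdf_lipschitz
    {Ω : Type*} [MeasurableSpace Ω] (μ : Measure Ω) [IsProbabilityMeasure μ]
    (Mr Mg' : ℝ) (hMr : 0 < Mr) (hMg' : 0 < Mg')
    (X Y : Ω → ℝ) (hX : Measurable X) (hY : Measurable Y)
    (hXb : ∀ᵐ ω ∂μ, |X ω| ≤ Mr) (hYb : ∀ᵐ ω ∂μ, |Y ω| ≤ Mr)
    (g : ℝ → ℝ) (hg0 : g 0 = 0) (hg1 : g 1 = 1)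
    (hgmaps : Set.MapsTo g (Set.Icc 0 1) (Set.Icc 0 1))
    (hglip : ∀ s ∈ Set.Icc (0:ℝ) 1, ∀ t ∈ Set.Icc (0:ℝ) 1,
      |g s - g t| ≤ Mg' * |s - t|)
    (FX FY : ℝ → ℝ)
    (hFX : ∀ x, FX x = (μ {ω | X ω ≤ x}).toReal)
    (hFY : ∀ x, FY x = (μ {ω | Y ω ≤ x}).toReal) :
    |((∫ x in (-Mr)..0, (g (1 - FX x) - 1)) + ∫ x in (0:ℝ)..Mr, g (1 - FX x))
        - ((∫ x in (-Mr)..0, (g (1 - FY x) - 1)) + ∫ x in (0:ℝ)..Mr, g (1 - FY x))|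
      ≤ Mg' * ∫ x in (-Mr)..Mr, |FX x - FY x| := by
  -- basic facts about the CDFs
  have hFmem : ∀ (Z : Ω → ℝ) (F : ℝ → ℝ),
      (∀ x, F x = (μ {ω | Z ω ≤ x}).toReal) → ∀ x, F x ∈ Set.Icc (0:ℝ) 1 := by
    intro Z F hF x
    rw [hF x]
    constructor
    · exact ENNReal.toReal_nonneg
    · exact ENNReal.toReal_le_of_le_ofReal one_pos.le (by simpa using prob_le_one)
  have hFXmem := hFmem X FX hFX
  have hFYmem := hFmem Y FY hFY
  have hFmono : ∀ (Z : Ω → ℝ) (F : ℝ → ℝ),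
      (∀ x, F x = (μ {ω | Z ω ≤ x}).toReal) → Monotone F := by
    intro Z F hF x y hxy
    rw [hF x, hF y]
    refine ENNReal.toReal_mono (measure_ne_top _ _) (measure_mono ?_)
    intro ω hω; exact le_trans hω hxy
  have hFXm : Measurable FX := (hFmono X FX hFX).measurable
  have hFYm : Measurable FY := (hFmono Y FY hFY).measurable
  -- extend g to a globally Lipschitz function G
  have hlipOn : LipschitzOnWith (Real.toNNReal Mg') g (Set.Icc 0 1) := by
    rw [lipschitzOnWith_iff_dist_le_mul]
    intro s hs t ht
    rw [Real.dist_eq, Real.dist_eq, Real.coe_toNNReal _ hMg'.le]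
    exact hglip s hs t ht
  obtain ⟨G, hGlip, hGeq⟩ := hlipOn.extend_real
  have hGm : Measurable G := hGlip.continuous.measurable
  have hmem : ∀ (F : ℝ → ℝ), (∀ x, F x ∈ Set.Icc (0:ℝ) 1) →
      ∀ x, (1 - F x) ∈ Set.Icc (0:ℝ) 1 := by
    intro F hF x
    have := hF x
    constructor <;> [linarith [this.2]; linarith [this.1]]
  have hgGX : ∀ x, g (1 - FX x) = G (1 - FX x) := fun x =>
    hGeq (hmem FX hFXmem x)
  have hgGY : ∀ x, g (1 - FY x) = G (1 - FY x) := fun x =>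
    hGeq (hmem FY hFYmem x)
  -- pointwise Lipschitz bound
  have hpt : ∀ x, |g (1 - FX x) - g (1 - FY x)| ≤ Mg' * |FX x - FY x| := by
    intro x
    have h := hglip _ (hmem FX hFXmem x) _ (hmem FY hFYmem x)
    have : |(1 - FX x) - (1 - FY x)| = |FX x - FY x| := by
      rw [show (1 - FX x) - (1 - FY x) = -(FX x - FY x) by ring, abs_neg]
    rwa [this] at h
  -- integrability
  have hint : ∀ (F : ℝ → ℝ), Measurable F → (∀ x, F x ∈ Set.Icc (0:ℝ) 1) →
      ∀ a b : ℝ, IntervalIntegrable (fun x => g (1 - F x)) volume a b := by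
    intro F hFm hFmem' a b
    have heq : (fun x => g (1 - F x)) = fun x => G (1 - F x) := by
      funext x; exact hGeq (hmem F hFmem' x)
    rw [heq]
    have hm : Measurable fun x => G (1 - F x) :=
      hGm.comp (measurable_const.sub hFm)
    constructor <;>
    · refine Measure.integrableOn_of_bounded measure_Ioc_lt_top.ne
        hm.aestronglyMeasurable (M := 1) (Filter.Eventually.of_forall fun x => ?_)
      have h1 := hgmaps (hmem F hFmem' x)
      rw [← hGeq (hmem F hFmem' x)] at *
      rw [Real.norm_eq_abs, abs_le]
      exact ⟨by linarith [h1.1], h1.2⟩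
  have hintX := hint FX hFXm hFXmem
  have hintY := hint FY hFYm hFYmem
  have hintXY : ∀ a b : ℝ, IntervalIntegrable
      (fun x => Mg' * |FX x - FY x|) volume a b := by
    intro a b
    have hm : Measurable fun x => Mg' * |FX x - FY x| :=
      (measurable_const.mul (hFXm.sub hFYm).abs)
    constructor <;>
    · refine Measure.integrableOn_of_bounded measure_Ioc_lt_top.ne
        hm.aestronglyMeasurable (M := Mg' * 2) (Filter.Eventually.of_forall fun x => ?_)
      have h1 := hFXmem x; have h2 := hFYmem x
      rw [Real.norm_eq_abs, abs_of_nonneg (by positivity)]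
      obtain ⟨h1a, h1b⟩ := h1
      obtain ⟨h2a, h2b⟩ := h2
      have : |FX x - FY x| ≤ 2 := by
        rw [abs_le]; constructor <;> linarith
      nlinarith
  -- rewrite difference as integrals of differences
  have e1 : (∫ x in (-Mr)..0, (g (1 - FX x) - 1)) - ∫ x in (-Mr)..0, (g (1 - FY x) - 1)
      = ∫ x in (-Mr)..0, (g (1 - FX x) - g (1 - FY x)) := by
    rw [← intervalIntegral.integral_sub ((hintX (-Mr) 0).sub (intervalIntegrable_const))
      ((hintY (-Mr) 0).sub (intervalIntegrable_const))]
    congr 1; funext x; ring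
  have e2 : (∫ x in (0:ℝ)..Mr, g (1 - FX x)) - ∫ x in (0:ℝ)..Mr, g (1 - FY x)
      = ∫ x in (0:ℝ)..Mr, (g (1 - FX x) - g (1 - FY x)) := by
    rw [← intervalIntegral.integral_sub (hintX 0 Mr) (hintY 0 Mr)]
  have key : ((∫ x in (-Mr)..0, (g (1 - FX x) - 1)) + ∫ x in (0:ℝ)..Mr, g (1 - FX x))
        - ((∫ x in (-Mr)..0, (g (1 - FY x) - 1)) + ∫ x in (0:ℝ)..Mr, g (1 - FY x))
      = (∫ x in (-Mr)..0, (g (1 - FX x) - g (1 - FY x)))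
        + ∫ x in (0:ℝ)..Mr, (g (1 - FX x) - g (1 - FY x)) := by
    rw [← e1, ← e2]; ring
  rw [key]
  have habs : ∀ a b : ℝ, a ≤ b →
      |∫ x in a..b, (g (1 - FX x) - g (1 - FY x))| ≤ ∫ x in a..b, Mg' * |FX x - FY x| := by
    intro a b hab
    calc |∫ x in a..b, (g (1 - FX x) - g (1 - FY x))|
        ≤ ∫ x in a..b, |g (1 - FX x) - g (1 - FY x)| :=
          intervalIntegral.abs_integral_le_integral_abs hab
      _ ≤ ∫ x in a..b, Mg' * |FX x - FY x| := by
          refine intervalIntegral.integral_mono_on hab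
            ((hintX a b).sub (hintY a b)).abs (hintXY a b) fun x _ => hpt x
  have hsum : (∫ x in (-Mr)..0, Mg' * |FX x - FY x|)
      + (∫ x in (0:ℝ)..Mr, Mg' * |FX x - FY x|)
      = ∫ x in (-Mr)..Mr, Mg' * |FX x - FY x| :=
    intervalIntegral.integral_add_adjacent_intervals (hintXY (-Mr) 0) (hintXY 0 Mr)
  calc |(∫ x in (-Mr)..0, (g (1 - FX x) - g (1 - FY x)))
        + ∫ x in (0:ℝ)..Mr, (g (1 - FX x) - g (1 - FY x))|
      ≤ |∫ x in (-Mr)..0, (g (1 - FX x) - g (1 - FY x))|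
        + |∫ x in (0:ℝ)..Mr, (g (1 - FX x) - g (1 - FY x))| := abs_add_le _ _
    _ ≤ (∫ x in (-Mr)..0, Mg' * |FX x - FY x|)
        + ∫ x in (0:ℝ)..Mr, Mg' * |FX x - FY x| :=
        add_le_add (habs _ _ (by linarith)) (habs _ _ hMr.le)
    _ = ∫ x in (-Mr)..Mr, Mg' * |FX x - FY x| := hsum
    _ = Mg' * ∫ x in (-Mr)..Mr, |FX x - FY x| := by
        rw [← intervalIntegral.integral_const_mul]
end

section
/- Let X₁,...,Xₘ be i.i.d. real random variables with common CDF F, supported in [-M_r, M_r], let Gₘ be their empirical CDF, and let g : [0,1] → [0,1] be M_{g'}-Lipschitz with g(0)=0, g(1)=1. Define ρ̂ = ∫_{-M_r}^{0}(g(1-Gₘ(x)) - 1)dx + ∫_{0}^{M_r} g(1-Gₘ(x))dx and ρ = ∫_{-M_r}^{0}(g(1-F(x)) - 1)dx + ∫_{0}^{M_r} g(1-F(x))dx. Then E[|ρ - ρ̂|²] ≤ 16 M_r² M_{g'}² / m. -/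
open MeasureTheory ProbabilityTheory


lemma cs_integral {α : Type*} [MeasurableSpace α] (ν : Measure α) [IsFiniteMeasure ν]
    {f : α → ℝ} (hf : AEStronglyMeasurable f ν) (h0 : ∀ x, 0 ≤ f x) (hb : ∀ x, f x ≤ 1) :
    (∫ x, f x ∂ν) ^ 2 ≤ (ν Set.univ).toReal * ∫ x, f x ^ 2 ∂ν := by
  have hpq : Real.HolderConjugate 2 2 := Real.HolderConjugate.two_two
  have hf2 : MemLp f (ENNReal.ofReal 2) ν :=
    MemLp.of_bound hf 1 (ae_of_all _ fun x => by
      rw [Real.norm_eq_abs, abs_of_nonneg (h0 x)]; exact hb x)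
  have hg2 : MemLp (fun _ : α => (1:ℝ)) (ENNReal.ofReal 2) ν := memLp_const 1
  have key := integral_mul_le_Lp_mul_Lq_of_nonneg hpq (ae_of_all _ h0)
    (ae_of_all _ fun _ => zero_le_one) hf2 hg2
  simp only [mul_one, Real.one_rpow, one_pow] at key
  have h1 : ∫ _a : α, (1:ℝ) ∂ν = (ν Set.univ).toReal := by simp [measureReal_def]
  rw [h1] at key
  have hint2 : (0:ℝ) ≤ ∫ a, f a ^ (2:ℝ) ∂ν :=
    integral_nonneg fun x => Real.rpow_nonneg (h0 x) 2
  have hsq : (∫ x, f x ∂ν) ^ 2 ≤ ((∫ a, f a ^ (2:ℝ) ∂ν) ^ ((1:ℝ)/2) * (ν Set.univ).toReal ^ ((1:ℝ)/2)) ^ 2 := by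
    apply pow_le_pow_left₀ (integral_nonneg h0) key
  refine hsq.trans_eq ?_
  rw [mul_pow, ← Real.rpow_natCast ((∫ a, f a ^ (2:ℝ) ∂ν) ^ ((1:ℝ)/2)) 2,
    ← Real.rpow_natCast ((ν Set.univ).toReal ^ ((1:ℝ)/2)) 2,
    ← Real.rpow_mul hint2, ← Real.rpow_mul ENNReal.toReal_nonneg]
  norm_num
  rw [mul_comm]


lemma emp_mse {Ω : Type*} [MeasurableSpace Ω] (μ : Measure Ω) [IsProbabilityMeasure μ]
    (m : ℕ) (hm : 1 ≤ m) (X : Fin m → Ω → ℝ) (hmeas : ∀ i, Measurable (X i))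
    (hindep : iIndepFun X μ) (x : ℝ) (p : ℝ)
    (hp : ∀ i, p = (μ {ω | X i ω ≤ x}).toReal) :
    ∫ ω, (p - (1 / (m:ℝ)) * ∑ i, (if X i ω ≤ x then (1:ℝ) else 0)) ^ 2 ∂μ ≤ 1 / (m:ℝ) := by
  have hm0 : (0:ℝ) < m := by exact_mod_cast hm
  set Y : Fin m → Ω → ℝ := fun i ω => if X i ω ≤ x then (1:ℝ) else 0 with hY
  have hSmeas : ∀ i, MeasurableSet {ω | X i ω ≤ x} := fun i =>
    measurableSet_le (hmeas i) measurable_const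
  have hYmeas : ∀ i, Measurable (Y i) := fun i =>
    Measurable.ite (hSmeas i) measurable_const measurable_const
  have hY01 : ∀ i ω, Y i ω = 0 ∨ Y i ω = 1 := fun i ω => by
    by_cases h : X i ω ≤ x <;> simp [hY, h]
  have hYb : ∀ i ω, |Y i ω| ≤ 1 := fun i ω => by
    rcases hY01 i ω with h | h <;> simp [h]
  have hYm : ∀ i, MemLp (Y i) 2 μ := fun i =>
    MemLp.of_bound (hYmeas i).aestronglyMeasurable 1
      (ae_of_all _ fun ω => by simpa using hYb i ω)
  have hEY : ∀ i, ∫ ω, Y i ω ∂μ = p := by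
    intro i
    have : ∀ ω, Y i ω = Set.indicator {ω | X i ω ≤ x} (fun _ => (1:ℝ)) ω := by
      intro ω; simp [hY, Set.indicator_apply]
    rw [integral_congr_ae (ae_of_all _ this), integral_indicator_const _ (hSmeas i),
      smul_eq_mul, mul_one, hp i, measureReal_def]
  -- variance of each Y i is at most 1
  have hVarY : ∀ i, variance (Y i) μ ≤ 1 := by
    intro i
    rw [variance_eq_sub (hYm i)]
    have h2 : ∫ ω, (Y i ^ 2) ω ∂μ ≤ 1 := by
      have : ∀ ω, (Y i ^ 2) ω ≤ 1 := fun ω => by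
        rcases hY01 i ω with h | h <;> simp [h]
      calc ∫ ω, (Y i ^ 2) ω ∂μ ≤ ∫ _ω : Ω, (1:ℝ) ∂μ :=
            integral_mono_of_nonneg (ae_of_all _ fun ω => sq_nonneg _)
              (integrable_const 1) (ae_of_all _ this)
        _ = 1 := by simp
    nlinarith [sq_nonneg (∫ ω, Y i ω ∂μ)]
  -- independence of the Y i pairwise
  have hYindep : Set.Pairwise ↑(Finset.univ : Finset (Fin m))
      (fun i j => IndepFun (Y i) (Y j) μ) := by
    intro i _ j _ hij
    have hf : Measurable (fun t : ℝ => if t ≤ x then (1:ℝ) else 0) :=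
      Measurable.ite measurableSet_Iic measurable_const measurable_const
    exact (hindep.indepFun hij).comp hf hf
  have hVarSum : variance (∑ i, Y i) μ ≤ m := by
    rw [IndepFun.variance_sum (fun i _ => hYm i) hYindep]
    calc ∑ i, variance (Y i) μ ≤ ∑ _i : Fin m, (1:ℝ) :=
          Finset.sum_le_sum fun i _ => hVarY i
      _ = m := by simp
  -- the empirical mean
  set S : Ω → ℝ := ∑ i, Y i with hS
  have hSm : MemLp S 2 μ := memLp_finset_sum' _ fun i _ => hYm i
  have hGm : MemLp ((1/(m:ℝ)) • S) 2 μ := hSm.const_smul _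
  have hES : ∫ ω, S ω ∂μ = m * p := by
    rw [hS]
    have : ∫ ω, (∑ i, Y i) ω ∂μ = ∑ i, ∫ ω, Y i ω ∂μ := by
      simp only [Finset.sum_apply]
      exact integral_finset_sum _ fun i _ => (hYm i).integrable one_le_two
    rw [this]
    simp [hEY]
  have hEG : ∫ ω, ((1/(m:ℝ)) • S) ω ∂μ = p := by
    simp only [Pi.smul_apply, smul_eq_mul]
    rw [integral_const_mul, hES]
    field_simp
  have hVarG : variance ((1/(m:ℝ)) • S) μ ≤ 1 / m := by
    rw [variance_smul]
    calc (1/(m:ℝ))^2 * variance S μ ≤ (1/(m:ℝ))^2 * m :=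
        mul_le_mul_of_nonneg_left hVarSum (by positivity)
      _ = 1 / m := by field_simp
  have key : ∫ ω, (p - (1 / (m:ℝ)) * ∑ i, (if X i ω ≤ x then (1:ℝ) else 0)) ^ 2 ∂μ
      = variance ((1/(m:ℝ)) • S) μ := by
    rw [variance_eq_integral hGm.aemeasurable, hEG]
    refine integral_congr_ae (ae_of_all _ fun ω => ?_)
    simp only [Pi.pow_apply, Pi.sub_apply, Pi.smul_apply, smul_eq_mul, hS, hY, Finset.sum_apply]
    ring_nf
  exact le_trans (le_of_eq key) hVarG

/-- Mean-squared-error bound for the empirical DRM estimate built from the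
empirical CDF of `m` i.i.d. samples bounded in `[-M_r, M_r]`:
`E[|ρ - ρ̂|²] ≤ 16 M_r² M_{g'}² / m`. -/
theorem drm_estimate_mse
    {Ω : Type*} [MeasurableSpace Ω] (μ : Measure Ω) [IsProbabilityMeasure μ]
    (m : ℕ) (hm : 1 ≤ m) (Mr Mg' : ℝ) (hMr : 0 < Mr) (hMg' : 0 < Mg')
    (X : Fin m → Ω → ℝ)
    (hmeas : ∀ i, Measurable (X i))
    (hindep : iIndepFun X μ)
    (hident : ∀ i j, μ.map (X i) = μ.map (X j))
    (hXb : ∀ i, ∀ᵐ ω ∂μ, |X i ω| ≤ Mr)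
    (F : ℝ → ℝ) (hF : ∀ (i : Fin m) (x : ℝ), F x = (μ {ω | X i ω ≤ x}).toReal)
    (G : ℝ → Ω → ℝ)
    (hG : ∀ x ω, G x ω = (1 / (m : ℝ)) * ∑ i, if X i ω ≤ x then (1:ℝ) else 0)
    (g : ℝ → ℝ) (hg0 : g 0 = 0) (hg1 : g 1 = 1)
    (hgmaps : Set.MapsTo g (Set.Icc 0 1) (Set.Icc 0 1))
    (hglip : ∀ s t : ℝ, |g s - g t| ≤ Mg' * |s - t|)
    (ρ : ℝ) (hρ : ρ = (∫ x in (-Mr)..0, (g (1 - F x) - 1))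
                        + ∫ x in (0:ℝ)..Mr, g (1 - F x))
    (ρhat : Ω → ℝ)
    (hρhat : ∀ ω, ρhat ω = (∫ x in (-Mr)..0, (g (1 - G x ω) - 1))
                              + ∫ x in (0:ℝ)..Mr, g (1 - G x ω)) :
    ∫ ω, |ρ - ρhat ω| ^ 2 ∂μ ≤ 16 * Mr ^ 2 * Mg' ^ 2 / m := by
  have i0 : Fin m := ⟨0, hm⟩
  have hm0 : (0:ℝ) < m := by exact_mod_cast hm
  have hab : (-Mr) ≤ Mr := by linarith
  -- F is a CDF-like function: monotone, in [0,1]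
  have hF0 : ∀ x, 0 ≤ F x := fun x => by rw [hF i0]; exact ENNReal.toReal_nonneg
  have hF1 : ∀ x, F x ≤ 1 := fun x => by
    rw [hF i0]
    exact (ENNReal.toReal_le_of_le_ofReal zero_le_one (by simpa using prob_le_one))
  have hFmono : Monotone F := fun x y hxy => by
    rw [hF i0, hF i0]
    exact ENNReal.toReal_mono (measure_ne_top _ _)
      (measure_mono fun ω hω => le_trans hω hxy)
  have hFmeas : Measurable F := hFmono.measurable
  -- G is in [0,1] and monotone in x
  have hG0 : ∀ x ω, 0 ≤ G x ω := fun x ω => by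
    rw [hG]
    have : (0:ℝ) ≤ ∑ i, (if X i ω ≤ x then (1:ℝ) else 0) :=
      Finset.sum_nonneg fun i _ => by positivity
    positivity
  have hG1 : ∀ x ω, G x ω ≤ 1 := fun x ω => by
    rw [hG]
    have h1 : ∑ i, (if X i ω ≤ x then (1:ℝ) else 0) ≤ ∑ _i : Fin m, (1:ℝ) :=
      Finset.sum_le_sum fun i _ => by split <;> norm_num
    have h2 : ∑ _i : Fin m, (1:ℝ) = m := by simp
    rw [div_mul_eq_mul_div, one_mul, div_le_one hm0]
    linarith
  have hGmono : ∀ ω, Monotone fun x => G x ω := fun ω x y hxy => by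
    show G x ω ≤ G y ω
    rw [hG, hG]
    have : ∑ i, (if X i ω ≤ x then (1:ℝ) else 0) ≤ ∑ i, (if X i ω ≤ y then (1:ℝ) else 0) :=
      Finset.sum_le_sum fun i _ => by
        by_cases h : X i ω ≤ x
        · simp [h, le_trans h hxy]
        · simp only [if_neg h]
          split <;> norm_num
    have hpos : (0:ℝ) ≤ 1 / (m:ℝ) := by positivity
    exact mul_le_mul_of_nonneg_left this hpos
  have hGmeasx : ∀ ω, Measurable fun x => G x ω := fun ω => (hGmono ω).measurable
  -- bounds on the composed functions
  have hg01 : ∀ t : ℝ, 0 ≤ t → t ≤ 1 → |g t| ≤ 1 := fun t ht0 ht1 => by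
    have := hgmaps (Set.mem_Icc.2 ⟨ht0, ht1⟩)
    rw [abs_le]; exact ⟨by linarith [this.1], this.2⟩
  have hgcont : Continuous g := by
    have : LipschitzWith (Real.toNNReal Mg') g := by
      refine LipschitzWith.of_dist_le_mul fun s t => ?_
      rw [Real.dist_eq, Real.dist_eq, Real.coe_toNNReal _ hMg'.le]
      exact hglip s t
    exact this.continuous
  -- interval integrability of bounded measurable functions
  have hii : ∀ (f : ℝ → ℝ) (C a b : ℝ), Measurable f → (∀ x, |f x| ≤ C) →
      IntervalIntegrable f volume a b := by
    intro f C a b hfm hfb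
    rw [intervalIntegrable_iff]
    haveI : IsFiniteMeasure (volume.restrict (Set.uIoc a b)) :=
      ⟨by rw [Measure.restrict_apply_univ]; exact measure_Ioc_lt_top⟩
    exact Integrable.mono' (integrable_const C) hfm.aestronglyMeasurable.restrict
      (ae_of_all _ fun x => by simpa using hfb x)
  have hφint : ∀ a b : ℝ, IntervalIntegrable (fun x => g (1 - F x)) volume a b := fun a b =>
    hii _ 1 a b (hgcont.measurable.comp (measurable_const.sub hFmeas))
      (fun x => hg01 _ (by linarith [hF1 x]) (by linarith [hF0 x]))
  have hψint : ∀ (ω : Ω) (a b : ℝ), IntervalIntegrable (fun x => g (1 - G x ω)) volume a b :=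
    fun ω a b =>
    hii _ 1 a b (hgcont.measurable.comp (measurable_const.sub (hGmeasx ω)))
      (fun x => hg01 _ (by linarith [hG1 x ω]) (by linarith [hG0 x ω]))
  have hDint : ∀ (ω : Ω) (a b : ℝ), IntervalIntegrable (fun x => F x - G x ω) volume a b :=
    fun ω a b =>
    hii _ 2 a b (hFmeas.sub (hGmeasx ω)) (fun x => by
      have := hF0 x; have := hF1 x; have := hG0 x ω; have := hG1 x ω
      rw [abs_le]; constructor <;> linarith)
  have hDb : ∀ ω x, |F x - G x ω| ≤ 1 := fun ω x => by
    have := hF0 x; have := hF1 x; have := hG0 x ω; have := hG1 x ω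
    rw [abs_le]; constructor <;> linarith
  -- Step 1: rewrite ρ - ρhat ω as a single interval integral
  have key1 : ∀ ω, ρ - ρhat ω
      = ∫ x in (-Mr)..Mr, (g (1 - F x) - g (1 - G x ω)) := by
    intro ω
    rw [hρ, hρhat ω]
    have e1 : (∫ x in (-Mr)..(0:ℝ), (g (1 - F x) - 1))
        - (∫ x in (-Mr)..(0:ℝ), (g (1 - G x ω) - 1))
        = ∫ x in (-Mr)..(0:ℝ), (g (1 - F x) - g (1 - G x ω)) := by
      rw [← intervalIntegral.integral_sub ((hφint _ _).sub (intervalIntegrable_const))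
        ((hψint ω _ _).sub (intervalIntegrable_const))]
      exact intervalIntegral.integral_congr fun x _ => by ring
    have e2 : (∫ x in (0:ℝ)..Mr, g (1 - F x)) - (∫ x in (0:ℝ)..Mr, g (1 - G x ω))
        = ∫ x in (0:ℝ)..Mr, (g (1 - F x) - g (1 - G x ω)) := by
      rw [← intervalIntegral.integral_sub (hφint _ _) (hψint ω _ _)]
    have e3 := intervalIntegral.integral_add_adjacent_intervals
      (a := -Mr) (b := 0) (c := Mr)
      (f := fun x => g (1 - F x) - g (1 - G x ω)) (μ := volume)
      ((hφint _ _).sub (hψint ω _ _)) ((hφint _ _).sub (hψint ω _ _))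
    linarith [e1, e2, e3]
  -- Step 2: Lipschitz bound
  have key2 : ∀ ω, |ρ - ρhat ω| ≤ Mg' * ∫ x in (-Mr)..Mr, |F x - G x ω| := by
    intro ω
    rw [key1 ω]
    calc |∫ x in (-Mr)..Mr, (g (1 - F x) - g (1 - G x ω))|
        ≤ ∫ x in (-Mr)..Mr, |g (1 - F x) - g (1 - G x ω)| :=
          intervalIntegral.abs_integral_le_integral_abs hab
      _ ≤ ∫ x in (-Mr)..Mr, Mg' * |F x - G x ω| := by
          refine intervalIntegral.integral_mono_on hab
            ((hφint _ _).sub (hψint ω _ _)).abs ((hDint ω _ _).abs.const_mul Mg')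
            (fun x _ => ?_)
          calc |g (1 - F x) - g (1 - G x ω)| ≤ Mg' * |(1 - F x) - (1 - G x ω)| := hglip _ _
            _ = Mg' * |F x - G x ω| := by rw [show (1 - F x) - (1 - G x ω) = -(F x - G x ω) by ring, abs_neg]
      _ = Mg' * ∫ x in (-Mr)..Mr, |F x - G x ω| := by
          rw [intervalIntegral.integral_const_mul]
  -- the restricted Lebesgue measure on (-Mr, Mr]
  set ν : Measure ℝ := volume.restrict (Set.Ioc (-Mr) Mr) with hν
  haveI hνfin : IsFiniteMeasure ν := ⟨by
    rw [hν, Measure.restrict_apply_univ]; exact measure_Ioc_lt_top⟩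
  have hνuniv : (ν Set.univ).toReal = 2 * Mr := by
    rw [hν, Measure.restrict_apply_univ, Real.volume_Ioc, ENNReal.toReal_ofReal (by linarith)]
    ring
  -- Step 3: Cauchy-Schwarz pointwise in ω
  have key3 : ∀ ω, |ρ - ρhat ω| ^ 2
      ≤ Mg' ^ 2 * (2 * Mr) * ∫ x, (F x - G x ω) ^ 2 ∂ν := by
    intro ω
    have hcs := cs_integral ν (f := fun x => |F x - G x ω|)
      ((hFmeas.sub (hGmeasx ω)).abs.aestronglyMeasurable) (fun x => abs_nonneg _) (hDb ω)
    rw [hνuniv] at hcs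
    have habs : ∀ x, |F x - G x ω| ^ 2 = (F x - G x ω) ^ 2 := fun x => sq_abs _
    have hiv : (∫ x in (-Mr)..Mr, |F x - G x ω|) = ∫ x, |F x - G x ω| ∂ν := by
      rw [intervalIntegral.integral_of_le hab, hν]
    have hRHS0 : 0 ≤ Mg' * ∫ x in (-Mr)..Mr, |F x - G x ω| := by
      refine mul_nonneg hMg'.le ?_
      exact intervalIntegral.integral_nonneg hab fun x _ => abs_nonneg _
    calc |ρ - ρhat ω| ^ 2 ≤ (Mg' * ∫ x in (-Mr)..Mr, |F x - G x ω|) ^ 2 :=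
          pow_le_pow_left₀ (abs_nonneg _) (key2 ω) 2
      _ = Mg' ^ 2 * (∫ x, |F x - G x ω| ∂ν) ^ 2 := by rw [hiv, mul_pow]
      _ ≤ Mg' ^ 2 * (2 * Mr * ∫ x, |F x - G x ω| ^ 2 ∂ν) := by
          exact mul_le_mul_of_nonneg_left hcs (by positivity)
      _ = Mg' ^ 2 * (2 * Mr) * ∫ x, (F x - G x ω) ^ 2 ∂ν := by
          rw [← mul_assoc]
          congr 1
          exact integral_congr_ae (ae_of_all _ fun x => habs x)
  -- joint measurability
  have hjoint : Measurable fun p : Ω × ℝ => (F p.2 - G p.2 p.1) ^ 2 := by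
    have hGj : Measurable fun p : Ω × ℝ => G p.2 p.1 := by
      have : (fun p : Ω × ℝ => G p.2 p.1)
          = fun p => (1 / (m:ℝ)) * ∑ i, (if X i p.1 ≤ p.2 then (1:ℝ) else 0) :=
        funext fun p => hG p.2 p.1
      rw [this]
      refine Measurable.const_mul (Finset.measurable_sum _ fun i _ => ?_) _
      exact Measurable.ite
        (measurableSet_le ((hmeas i).comp measurable_fst) measurable_snd)
        measurable_const measurable_const
    exact ((hFmeas.comp measurable_snd).sub hGj).pow_const 2
  -- measurability and integrability of the inner integral
  have hI_sm : StronglyMeasurable fun ω => ∫ x, (F x - G x ω) ^ 2 ∂ν :=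
    StronglyMeasurable.integral_prod_right' (f := fun p : Ω × ℝ => (F p.2 - G p.2 p.1) ^ 2)
      hjoint.stronglyMeasurable
  have hIb : ∀ ω, ∫ x, (F x - G x ω) ^ 2 ∂ν ≤ 2 * Mr := by
    intro ω
    calc ∫ x, (F x - G x ω) ^ 2 ∂ν ≤ ∫ _x : ℝ, (1:ℝ) ∂ν := by
          refine integral_mono_of_nonneg (ae_of_all _ fun x => sq_nonneg _)
            (integrable_const 1) (ae_of_all _ fun x => ?_)
          have h := hDb ω x
          have h2 : (F x - G x ω) ^ 2 ≤ 1 := by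
            nlinarith [abs_nonneg (F x - G x ω), sq_abs (F x - G x ω)]
          simpa using h2
      _ = 2 * Mr := by rw [integral_const, measureReal_def, hνuniv, smul_eq_mul, mul_one]
  have hI0 : ∀ ω, 0 ≤ ∫ x, (F x - G x ω) ^ 2 ∂ν := fun ω =>
    integral_nonneg fun x => sq_nonneg _
  have hI_int : Integrable (fun ω => ∫ x, (F x - G x ω) ^ 2 ∂ν) μ :=
    Integrable.mono' (integrable_const (2 * Mr)) hI_sm.aestronglyMeasurable
      (ae_of_all _ fun ω => by
        rw [Real.norm_eq_abs, abs_of_nonneg (hI0 ω)]; exact hIb ω)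
  -- Fubini
  have hswap : ∫ ω, (∫ x, (F x - G x ω) ^ 2 ∂ν) ∂μ
      = ∫ x, (∫ ω, (F x - G x ω) ^ 2 ∂μ) ∂ν := by
    refine integral_integral_swap ?_
    refine Integrable.mono' (integrable_const 1) hjoint.aestronglyMeasurable
      (ae_of_all _ fun p => ?_)
    rw [Real.norm_eq_abs, abs_of_nonneg (by simp [Function.uncurry]; positivity : (0:ℝ) ≤ Function.uncurry (fun ω x => (F x - G x ω) ^ 2) p)]
    have h := hDb p.1 p.2
    have h2 : (F p.2 - G p.2 p.1) ^ 2 ≤ 1 := by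
      nlinarith [abs_nonneg (F p.2 - G p.2 p.1), sq_abs (F p.2 - G p.2 p.1)]
    simpa [Function.uncurry] using h2
  -- pointwise-in-x MSE bound
  have hmse : ∀ x : ℝ, ∫ ω, (F x - G x ω) ^ 2 ∂μ ≤ 1 / (m:ℝ) := by
    intro x
    have := emp_mse μ m hm X hmeas hindep x (F x) (fun i => hF i x)
    refine le_trans (le_of_eq ?_) this
    refine integral_congr_ae (ae_of_all _ fun ω => ?_)
    simp only [hG]
  have hx_int : ∫ x, (∫ ω, (F x - G x ω) ^ 2 ∂μ) ∂ν ≤ 2 * Mr * (1 / (m:ℝ)) := by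
    calc ∫ x, (∫ ω, (F x - G x ω) ^ 2 ∂μ) ∂ν ≤ ∫ _x : ℝ, (1 / (m:ℝ)) ∂ν :=
          integral_mono_of_nonneg
            (ae_of_all _ fun x => integral_nonneg fun ω => sq_nonneg _)
            (integrable_const _) (ae_of_all _ fun x => hmse x)
      _ = 2 * Mr * (1 / (m:ℝ)) := by rw [integral_const, measureReal_def, hνuniv, smul_eq_mul]
  -- put everything together
  calc ∫ ω, |ρ - ρhat ω| ^ 2 ∂μ
      ≤ ∫ ω, Mg' ^ 2 * (2 * Mr) * ∫ x, (F x - G x ω) ^ 2 ∂ν ∂μ :=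
        integral_mono_of_nonneg (ae_of_all _ fun ω => by positivity)
          (hI_int.const_mul _) (ae_of_all _ fun ω => key3 ω)
    _ = Mg' ^ 2 * (2 * Mr) * ∫ ω, (∫ x, (F x - G x ω) ^ 2 ∂ν) ∂μ := integral_const_mul _ _
    _ = Mg' ^ 2 * (2 * Mr) * ∫ x, (∫ ω, (F x - G x ω) ^ 2 ∂μ) ∂ν := by rw [hswap]
    _ ≤ Mg' ^ 2 * (2 * Mr) * (2 * Mr * (1 / (m:ℝ))) :=
        mul_le_mul_of_nonneg_left hx_int (by positivity)
    _ ≤ 16 * Mr ^ 2 * Mg' ^ 2 / m := by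
        rw [div_eq_mul_inv, div_eq_mul_inv]
        have h1 : (0:ℝ) < ((m:ℝ))⁻¹ := by positivity
        nlinarith [mul_pos (mul_pos hMr hMr) (mul_pos hMg' hMg'), sq_nonneg Mr, sq_nonneg Mg']
end

section
/- Let ρ : ℝᵈ → ℝ be L-Lipschitz, let v₁,...,vₙ be i.i.d. uniform on the unit sphere S^{d-1}, μ > 0, and define the estimator Ĝ(θ) = (d/n)·Σ_{i=1}^{n} [(ρ(θ + μvᵢ) - ρ(θ - μvᵢ))/(2μ)]·vᵢ. Then E[‖Ĝ(θ)‖²] ≤ d²L²/n + ‖E[Ĝ(θ)]‖²·(n-1)/n ≤ d²L² ; in particular, the variance-type bound E[‖Ĝ(θ) - E[Ĝ(θ)]‖²] ≤ d²L²/n holds, and when additionally ρ is even around θ in the sense that the summands are mean-zero one has E[‖Ĝ(θ)‖²] ≤ d²L²/n. -/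
open MeasureTheory Metric

/-- The uniform probability measure on the unit sphere, as a measure on `ℝᵈ`. -/
noncomputable def sphereUniformE (d : ℕ) : Measure (EuclideanSpace ℝ (Fin d)) :=
  (((volume : Measure (EuclideanSpace ℝ (Fin d))).toSphere Set.univ)⁻¹ •
    (volume : Measure (EuclideanSpace ℝ (Fin d))).toSphere).map
    (Subtype.val : sphere (0 : EuclideanSpace ℝ (Fin d)) 1 → EuclideanSpace ℝ (Fin d))

lemma coord_abs_le_norm' {d : ℕ} (x : EuclideanSpace ℝ (Fin d)) (k : Fin d) : |x k| ≤ ‖x‖ := by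
  rw [EuclideanSpace.norm_eq]
  calc |x k| = Real.sqrt (‖x k‖ ^ 2) := by
        rw [Real.norm_eq_abs, Real.sqrt_sq (abs_nonneg _)]
    _ ≤ _ := Real.sqrt_le_sqrt
        (Finset.single_le_sum (f := fun i => ‖x i‖ ^ 2) (fun i _ => sq_nonneg _)
          (Finset.mem_univ k))

set_option maxHeartbeats 1000000 in
/-- Second-moment and variance bounds for the `n`-sample two-point
smoothed-functional gradient estimator of an `L`-Lipschitz function. -/
theorem sf_estimator_second_moment
    {Ω : Type*} [MeasurableSpace Ω] (μP : Measure Ω) [IsProbabilityMeasure μP]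
    (d n : ℕ) (hd : 1 ≤ d) (hn : 1 ≤ n) (μ L : ℝ) (hμ : 0 < μ) (hL : 0 < L)
    (ρ : EuclideanSpace ℝ (Fin d) → ℝ)
    (hlip : ∀ x y, |ρ x - ρ y| ≤ L * ‖x - y‖)
    (v : Fin n → Ω → EuclideanSpace ℝ (Fin d))
    (hvmeas : ∀ i, Measurable (v i))
    (hindep : ProbabilityTheory.iIndepFun v μP)
    (hdist : ∀ i, μP.map (v i) = sphereUniformE d)
    (θ : EuclideanSpace ℝ (Fin d))
    (Ghat : Ω → EuclideanSpace ℝ (Fin d))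
    (hGhat : ∀ ω, Ghat ω = ((d : ℝ) / n) •
      ∑ i, ((ρ (θ + μ • v i ω) - ρ (θ - μ • v i ω)) / (2 * μ)) • v i ω) :
    (∫ ω, ‖Ghat ω‖ ^ 2 ∂μP
        ≤ (d : ℝ) ^ 2 * L ^ 2 / n
          + ‖∫ ω, Ghat ω ∂μP‖ ^ 2 * ((n : ℝ) - 1) / n) ∧
    (∫ ω, ‖Ghat ω‖ ^ 2 ∂μP ≤ (d : ℝ) ^ 2 * L ^ 2) ∧
    (∫ ω, ‖Ghat ω - ∫ ω', Ghat ω' ∂μP‖ ^ 2 ∂μP ≤ (d : ℝ) ^ 2 * L ^ 2 / n) ∧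
    ((∫ ω, Ghat ω ∂μP) = 0 →
      ∫ ω, ‖Ghat ω‖ ^ 2 ∂μP ≤ (d : ℝ) ^ 2 * L ^ 2 / n) := by
  classical
  have hn0 : (0 : ℝ) < n := by exact_mod_cast hn
  have hn1 : (1 : ℝ) ≤ n := by exact_mod_cast hn

  -- the per-sample map
  let f : EuclideanSpace ℝ (Fin d) → EuclideanSpace ℝ (Fin d) := fun w => ((ρ (θ + μ • w) - ρ (θ - μ • w)) / (2 * μ)) • w
  have hρcont : Continuous ρ := by
    have : LipschitzWith (Real.toNNReal L) ρ := by
      apply LipschitzWith.of_dist_le_mul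
      intro x y
      simpa [Real.dist_eq, dist_eq_norm, Real.coe_toNNReal _ hL.le] using hlip x y
    exact this.continuous
  have hfcont : Continuous f := by fun_prop
  let X : Fin n → Ω → EuclideanSpace ℝ (Fin d) := fun i ω => f (v i ω)
  have hXmeas : ∀ i, Measurable (X i) := fun i => hfcont.measurable.comp (hvmeas i)
  -- a.e. each v i is on the sphere
  have hsph : ∀ i, ∀ᵐ ω ∂μP, ‖v i ω‖ = 1 := by
    intro i
    have hs : MeasurableSet (sphere (0 : EuclideanSpace ℝ (Fin d)) 1) := (isClosed_sphere).measurableSet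
    have h0 : μP (v i ⁻¹' (sphere (0 : EuclideanSpace ℝ (Fin d)) 1)ᶜ) = 0 := by
      rw [← Measure.map_apply (hvmeas i) hs.compl, hdist i]
      unfold sphereUniformE
      rw [Measure.map_apply measurable_subtype_coe hs.compl]
      have he : (Subtype.val : sphere (0 : EuclideanSpace ℝ (Fin d)) 1 → EuclideanSpace ℝ (Fin d)) ⁻¹' (sphere (0 : EuclideanSpace ℝ (Fin d)) 1)ᶜ = ∅ := by
        ext x; simp [x.2]
      rw [he]; simp
    rw [ae_iff]
    convert h0 using 2
    ext ω
    simp [mem_sphere_zero_iff_norm]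
  -- a.e. bound on each summand
  have hXbd : ∀ i, ∀ᵐ ω ∂μP, ‖X i ω‖ ≤ L := by
    intro i
    filter_upwards [hsph i] with ω hω
    have hnum : |ρ (θ + μ • v i ω) - ρ (θ - μ • v i ω)| ≤ 2 * μ * L := by
      have := hlip (θ + μ • v i ω) (θ - μ • v i ω)
      have harg : (θ + μ • v i ω) - (θ - μ • v i ω) = (2 * μ) • v i ω := by
        module
      rw [harg, norm_smul] at this
      rw [hω] at this
      calc |ρ (θ + μ • v i ω) - ρ (θ - μ • v i ω)| ≤ L * (‖(2 : ℝ) * μ‖ * 1) := this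
        _ = 2 * μ * L := by
            rw [Real.norm_eq_abs, abs_of_pos (by positivity)]; ring
    show ‖((ρ (θ + μ • v i ω) - ρ (θ - μ • v i ω)) / (2 * μ)) • v i ω‖ ≤ L
    rw [norm_smul, hω, mul_one, Real.norm_eq_abs, abs_div, abs_of_pos (show (0:ℝ) < 2 * μ by positivity)]
    rw [div_le_iff₀ (by positivity)]
    calc |ρ (θ + μ • v i ω) - ρ (θ - μ • v i ω)| ≤ 2 * μ * L := hnum
      _ = L * (2 * μ) := by ring
  have hXint : ∀ i, Integrable (X i) μP := fun i =>
    (integrable_const L).mono' (hXmeas i).aestronglyMeasurable (hXbd i)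
  -- all samples have the same mean
  have hXm : ∀ i j, ∫ ω, X i ω ∂μP = ∫ ω, X j ω ∂μP := by
    intro i j
    have h : ∀ i : Fin n, ∫ ω, X i ω ∂μP = ∫ w, f w ∂(sphereUniformE d) := by
      intro i
      rw [← hdist i, integral_map (hvmeas i).aemeasurable hfcont.aestronglyMeasurable]
    rw [h i, h j]
  set i0 : Fin n := ⟨0, hn⟩ with hi0
  set m : EuclideanSpace ℝ (Fin d) := ∫ ω, X i0 ω ∂μP with hm
  have hXm' : ∀ i, ∫ ω, X i ω ∂μP = m := fun i => hXm i i0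
  have hmL : ‖m‖ ≤ L := by
    calc ‖m‖ ≤ ∫ ω, ‖X i0 ω‖ ∂μP := norm_integral_le_integral_norm _
      _ ≤ ∫ _ω, L ∂μP := integral_mono_ae (hXint i0).norm (integrable_const L) (hXbd i0)
      _ = L := by simp
  have hm2 : ‖m‖ ^ 2 ≤ L ^ 2 := pow_le_pow_left₀ (norm_nonneg m) hmL 2
  -- coordinates of means
  have hcoord : ∀ i k, ∫ ω, X i ω k ∂μP = m k := by
    intro i k
    have := (EuclideanSpace.proj (𝕜 := ℝ) k).integral_comp_comm (hXint i)
    simpa [hXm' i] using this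
  -- integrability of inner products
  have hinner_int : ∀ i j, Integrable (fun ω => (inner ℝ (X i ω) (X j ω) : ℝ)) μP := by
    intro i j
    refine (integrable_const (L * L)).mono'
      ((hXmeas i).aestronglyMeasurable.inner (hXmeas j).aestronglyMeasurable) ?_
    filter_upwards [hXbd i, hXbd j] with ω h1 h2
    calc ‖(inner ℝ (X i ω) (X j ω) : ℝ)‖ ≤ ‖X i ω‖ * ‖X j ω‖ := norm_inner_le_norm _ _
      _ ≤ L * L := mul_le_mul h1 h2 (norm_nonneg _) hL.le
  -- cross terms
  have hcross : ∀ i j, i ≠ j → ∫ ω, (inner ℝ (X i ω) (X j ω) : ℝ) ∂μP = ‖m‖ ^ 2 := by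
    intro i j hij
    have hind : ProbabilityTheory.IndepFun (X i) (X j) μP :=
      (hindep.indepFun hij).comp hfcont.measurable hfcont.measurable
    have hprodint : ∀ k, Integrable (fun ω => X i ω k * X j ω k) μP := by
      intro k
      refine (integrable_const (L * L)).mono'
        ((((EuclideanSpace.proj (𝕜 := ℝ) k).continuous.measurable.comp (hXmeas i)).mul
          ((EuclideanSpace.proj (𝕜 := ℝ) k).continuous.measurable.comp (hXmeas j))).aestronglyMeasurable) ?_
      filter_upwards [hXbd i, hXbd j] with ω h1 h2
      rw [Real.norm_eq_abs, abs_mul]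
      exact mul_le_mul ((coord_abs_le_norm' _ k).trans h1)
        ((coord_abs_le_norm' _ k).trans h2) (abs_nonneg _) hL.le
    have hprod : ∀ k, ∫ ω, X i ω k * X j ω k ∂μP = m k * m k := by
      intro k
      have hik : ProbabilityTheory.IndepFun (fun ω => X i ω k) (fun ω => X j ω k) μP :=
        hind.comp ((EuclideanSpace.proj (𝕜 := ℝ) k)).continuous.measurable
          ((EuclideanSpace.proj (𝕜 := ℝ) k)).continuous.measurable
      have := hik.integral_mul_eq_mul_integral
        ((((EuclideanSpace.proj (𝕜 := ℝ) k).continuous.measurable.comp (hXmeas i))).aestronglyMeasurable)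
        ((((EuclideanSpace.proj (𝕜 := ℝ) k).continuous.measurable.comp (hXmeas j))).aestronglyMeasurable)
      rw [hcoord i k, hcoord j k] at this
      simpa using this
    have hexpand : (fun ω => (inner ℝ (X i ω) (X j ω) : ℝ))
        = fun ω => ∑ k, X i ω k * X j ω k := by
      funext ω
      rw [PiLp.inner_apply]
      simp [RCLike.inner_apply, mul_comm]
    rw [hexpand, integral_finset_sum _ (fun k _ => hprodint k)]
    have : ∑ k, ∫ ω, X i ω k * X j ω k ∂μP = ∑ k, m k * m k := by
      exact Finset.sum_congr rfl fun k _ => hprod k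
    rw [this, ← real_inner_self_eq_norm_sq]
    rw [PiLp.inner_apply]
    simp [RCLike.inner_apply, sq]
  -- diagonal terms
  have hdiag : ∀ i, ∫ ω, (inner ℝ (X i ω) (X i ω) : ℝ) ∂μP ≤ L ^ 2 := by
    intro i
    calc ∫ ω, (inner ℝ (X i ω) (X i ω) : ℝ) ∂μP ≤ ∫ _ω, L ^ 2 ∂μP := by
          refine integral_mono_ae (hinner_int i i) (integrable_const _) ?_
          filter_upwards [hXbd i] with ω h1
          rw [real_inner_self_eq_norm_sq]
          exact pow_le_pow_left₀ (norm_nonneg _) h1 2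
      _ = L ^ 2 := by simp
  -- rewrite Ghat
  have hGX : ∀ ω, Ghat ω = ((d : ℝ) / n) • ∑ i, X i ω := fun ω => by
    rw [hGhat]
  have hGint : Integrable Ghat μP := by
    have : Integrable (fun ω => ((d : ℝ) / n) • ∑ i, X i ω) μP :=
      (integrable_finset_sum _ (fun i _ => hXint i)).fun_smul _
    exact this.congr (Filter.Eventually.of_forall fun ω => (hGX ω).symm)
  -- expected value of Ghat
  have hEG : ∫ ω, Ghat ω ∂μP = (d : ℝ) • m := by
    rw [integral_congr_ae (Filter.Eventually.of_forall hGX)]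
    rw [integral_smul, integral_finset_sum _ (fun i _ => hXint i)]
    have : ∑ i : Fin n, ∫ ω, X i ω ∂μP = (n : ℕ) • m := by
      rw [Finset.sum_congr rfl fun i _ => hXm' i]
      simp
    rw [this, ← Nat.cast_smul_eq_nsmul ℝ, smul_smul]
    congr 1
    field_simp
  have hEGnorm : ‖∫ ω, Ghat ω ∂μP‖ ^ 2 = (d : ℝ) ^ 2 * ‖m‖ ^ 2 := by
    rw [hEG, norm_smul, mul_pow, Real.norm_eq_abs, sq_abs]
  -- the main expansion
  have hmain : ∫ ω, ‖Ghat ω‖ ^ 2 ∂μP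
      = ((d : ℝ) / n) ^ 2 * ∑ i, ∑ j, ∫ ω, (inner ℝ (X i ω) (X j ω) : ℝ) ∂μP := by
    have h1 : ∀ ω, ‖Ghat ω‖ ^ 2
        = ((d : ℝ) / n) ^ 2 * ∑ i, ∑ j, (inner ℝ (X i ω) (X j ω) : ℝ) := by
      intro ω
      rw [hGX ω, norm_smul, mul_pow, Real.norm_eq_abs, sq_abs,
        ← real_inner_self_eq_norm_sq, sum_inner]
      congr 1
      exact Finset.sum_congr rfl fun i _ => by rw [inner_sum]
    rw [integral_congr_ae (Filter.Eventually.of_forall h1), integral_const_mul]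
    congr 1
    rw [integral_finset_sum _ (fun i _ => integrable_finset_sum _ (fun j _ => hinner_int i j))]
    exact Finset.sum_congr rfl fun i _ => integral_finset_sum _ (fun j _ => hinner_int i j)
  -- bound on double sum
  have hsum : ∑ i, ∑ j, ∫ ω, (inner ℝ (X i ω) (X j ω) : ℝ) ∂μP
      ≤ (n : ℝ) * (L ^ 2 + ((n : ℝ) - 1) * ‖m‖ ^ 2) := by
    calc ∑ i, ∑ j, ∫ ω, (inner ℝ (X i ω) (X j ω) : ℝ) ∂μP
        ≤ ∑ _i : Fin n, (L ^ 2 + ((n : ℝ) - 1) * ‖m‖ ^ 2) := by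
          refine Finset.sum_le_sum fun i _ => ?_
          calc ∑ j, ∫ ω, (inner ℝ (X i ω) (X j ω) : ℝ) ∂μP
              ≤ ∑ j : Fin n, (if i = j then L ^ 2 else ‖m‖ ^ 2) := by
                refine Finset.sum_le_sum fun j _ => ?_
                by_cases h : i = j
                · subst h; rw [if_pos rfl]; exact hdiag i
                · rw [if_neg h, hcross i j h]
            _ = (L ^ 2 + ((n : ℝ) - 1) * ‖m‖ ^ 2) := by
                have heq : ∀ j : Fin n, (if i = j then L ^ 2 else ‖m‖ ^ 2)
                    = ‖m‖ ^ 2 + (if i = j then L ^ 2 - ‖m‖ ^ 2 else 0) := by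
                  intro j; by_cases h : i = j <;> simp [h]
                rw [Finset.sum_congr rfl fun j _ => heq j, Finset.sum_add_distrib,
                  Finset.sum_const, Finset.sum_ite_eq, if_pos (Finset.mem_univ i)]
                simp only [Finset.card_univ, Fintype.card_fin, nsmul_eq_mul]
                ring
      _ = (n : ℝ) * (L ^ 2 + ((n : ℝ) - 1) * ‖m‖ ^ 2) := by
          rw [Finset.sum_const]
          simp only [Finset.card_univ, Fintype.card_fin, nsmul_eq_mul]
  -- main inequality in terms of m
  have c1 : ∫ ω, ‖Ghat ω‖ ^ 2 ∂μP
      ≤ (d : ℝ) ^ 2 * L ^ 2 / n + (d : ℝ) ^ 2 * ‖m‖ ^ 2 * ((n : ℝ) - 1) / n := by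
    rw [hmain]
    calc ((d : ℝ) / n) ^ 2 * ∑ i, ∑ j, ∫ ω, (inner ℝ (X i ω) (X j ω) : ℝ) ∂μP
        ≤ ((d : ℝ) / n) ^ 2 * ((n : ℝ) * (L ^ 2 + ((n : ℝ) - 1) * ‖m‖ ^ 2)) :=
          mul_le_mul_of_nonneg_left hsum (by positivity)
      _ = (d : ℝ) ^ 2 * L ^ 2 / n + (d : ℝ) ^ 2 * ‖m‖ ^ 2 * ((n : ℝ) - 1) / n := by
          field_simp
  have claim1 : ∫ ω, ‖Ghat ω‖ ^ 2 ∂μP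
      ≤ (d : ℝ) ^ 2 * L ^ 2 / n + ‖∫ ω, Ghat ω ∂μP‖ ^ 2 * ((n : ℝ) - 1) / n := by
    rw [hEGnorm]
    exact c1
  have claim2 : ∫ ω, ‖Ghat ω‖ ^ 2 ∂μP ≤ (d : ℝ) ^ 2 * L ^ 2 := by
    refine c1.trans ?_
    rw [← add_div, div_le_iff₀ hn0]
    nlinarith [mul_nonneg (mul_nonneg (sub_nonneg.2 hn1) (sq_nonneg (d : ℝ))) (sub_nonneg.2 hm2)]
  -- variance identity
  set EG : EuclideanSpace ℝ (Fin d) := ∫ ω, Ghat ω ∂μP with hEGdef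
  have hGbd : ∀ᵐ ω ∂μP, ‖Ghat ω‖ ≤ (d : ℝ) * L := by
    have : ∀ᵐ ω ∂μP, ∀ i, ‖X i ω‖ ≤ L := (ae_all_iff).2 hXbd
    filter_upwards [this] with ω hω
    rw [hGX ω, norm_smul]
    calc ‖(d : ℝ) / n‖ * ‖∑ i, X i ω‖ ≤ ((d : ℝ) / n) * ((n : ℝ) * L) := by
          refine mul_le_mul ?_ ?_ (norm_nonneg _) (by positivity)
          · rw [Real.norm_eq_abs, abs_of_nonneg (by positivity)]
          · refine (norm_sum_le _ _).trans ?_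
            calc ∑ i, ‖X i ω‖ ≤ ∑ _i : Fin n, L := Finset.sum_le_sum fun i _ => hω i
              _ = (n : ℝ) * L := by
                  rw [Finset.sum_const]; simp [nsmul_eq_mul]
      _ = (d : ℝ) * L := by field_simp
  have hnormsq_int : Integrable (fun ω => ‖Ghat ω‖ ^ 2) μP := by
    refine (integrable_const (((d : ℝ) * L) ^ 2)).mono'
      (hGint.aestronglyMeasurable.norm.pow 2) ?_
    filter_upwards [hGbd] with ω hω
    rw [Real.norm_eq_abs, abs_of_nonneg (by positivity)]
    exact pow_le_pow_left₀ (norm_nonneg _) hω 2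
  have hvar : ∫ ω, ‖Ghat ω - EG‖ ^ 2 ∂μP = (∫ ω, ‖Ghat ω‖ ^ 2 ∂μP) - ‖EG‖ ^ 2 := by
    have hexp : ∀ ω, ‖Ghat ω - EG‖ ^ 2
        = ‖Ghat ω‖ ^ 2 - 2 * (inner ℝ EG (Ghat ω) : ℝ) + ‖EG‖ ^ 2 := by
      intro ω
      rw [norm_sub_sq_real, real_inner_comm]
    rw [integral_congr_ae (Filter.Eventually.of_forall hexp)]
    have hii : Integrable (fun ω => 2 * (inner ℝ EG (Ghat ω) : ℝ)) μP :=
      (hGint.const_inner EG).const_mul 2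
    have hsubint : Integrable (fun ω => ‖Ghat ω‖ ^ 2 - 2 * (inner ℝ EG (Ghat ω) : ℝ)) μP :=
      hnormsq_int.sub hii
    rw [integral_add hsubint (integrable_const _),
      integral_sub hnormsq_int hii, integral_const_mul, integral_inner hGint EG]
    rw [real_inner_self_eq_norm_sq]
    simp only [measure_univ, ENNReal.toReal_one, smul_eq_mul, one_mul, integral_const, probReal_univ]
    ring
  have claim3 : ∫ ω, ‖Ghat ω - ∫ ω', Ghat ω' ∂μP‖ ^ 2 ∂μP ≤ (d : ℝ) ^ 2 * L ^ 2 / n := by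
    rw [hvar]
    have hEGn : ‖EG‖ ^ 2 = (d : ℝ) ^ 2 * ‖m‖ ^ 2 := hEGnorm
    rw [hEGn]
    have h2 : (d : ℝ) ^ 2 * ‖m‖ ^ 2 * ((n : ℝ) - 1) / n ≤ (d : ℝ) ^ 2 * ‖m‖ ^ 2 := by
      rw [div_le_iff₀ hn0]
      exact mul_le_mul_of_nonneg_left (by linarith : (n : ℝ) - 1 ≤ n) (by positivity)
    linarith [c1]
  refine ⟨claim1, claim2, claim3, fun hz => ?_⟩
  have := claim1
  rw [hz] at this
  simpa using this
end
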